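/- Let n ≥ 2 and let d(n) denote the number of derangements of [n] whose flattened form avoids the vincular pattern 1-23. Then d(n) = 1; moreover the unique such derangement is the single n-cycle (1 n (n-1) ⋯ 2), i.e., the permutation whose flattened form is 1, n, n-1, ..., 2. -/

import Mathlib

open Finset Polynomial

open scoped Classical

open Fin.NatCast Fin.CommRing

/-- Auxiliary function: walk along the cycles of `π` in standard cycle form order,
starting from `cur`, having already visited `visited`, with `fuel` steps remaining. -/
def flatAux {n : ℕ} (π : Equiv.Perm (Fin n)) : ℕ → Fin n → Finset (Fin n) → List (Fin n)
  | 0, _, _ => []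
  | fuel+1, cur, visited =>
    cur ::
      (if π cur ∈ insert cur visited then
        (if h : (Finset.univ \ insert cur visited).Nonempty then
          flatAux π fuel ((Finset.univ \ insert cur visited).min' h) (insert cur visited)
        else [])
      else flatAux π fuel (π cur) (insert cur visited))

/-- The flattened form of a permutation of `{1,...,n}` (represented on `Fin n`):
write the standard cycle form (each cycle starting with its least element, cycles in
increasing order of least elements), erase parentheses, and read the word with
letters `1,...,n`. -/
def flat {n : ℕ} (π : Equiv.Perm (Fin n)) : List ℕ :=
  if h : 0 < n then (flatAux π n ⟨0, h⟩ ∅).map (fun x => (x : ℕ) + 1) else []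

/-- A derangement: a fixed-point-free permutation. -/
def isDerangement {n : ℕ} (π : Equiv.Perm (Fin n)) : Prop := ∀ i, π i ≠ i

/-- Number of (disjoint, nontrivial) cycles of a permutation. -/
def numCycles {n : ℕ} (π : Equiv.Perm (Fin n)) : ℕ := π.cycleType.card

/-- A word contains the vincular pattern 1-23: positions i < j with w_i < w_j < w_{j+1}. -/
def contains1_23 (w : List ℕ) : Prop :=
  ∃ i j : Fin w.length, (i : ℕ) < (j : ℕ) ∧ (j : ℕ) + 1 < w.length ∧
    w.getD (i : ℕ) 0 < w.getD (j : ℕ) 0 ∧ w.getD (j : ℕ) 0 < w.getD ((j : ℕ) + 1) 0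

def descL (n : ℕ) [NeZero n] : ℕ → List (Fin n)
  | 0 => []
  | c+1 => (((c+1 : ℕ)) : Fin n) :: descL n c

def vSet (n : ℕ) (c : ℕ) : Finset (Fin n) :=
  Finset.univ.filter (fun x => (x : ℕ) = 0 ∨ c < (x : ℕ))

lemma descL_length {n : ℕ} [NeZero n] (c : ℕ) : (descL n c).length = c := by
  induction c with
  | zero => rfl
  | succ c ih => simp [descL, ih]

lemma descL_getElem {n : ℕ} [NeZero n] :
    ∀ (c i : ℕ) (hc : c < n) (hi : i < c),
      ((descL n c)[i]'(by rw [descL_length]; exact hi) : Fin n).val = c - i := by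
  intro c
  induction c with
  | zero => intro i _ hi; omega
  | succ c ih =>
    intro i hc hi
    match i with
    | 0 =>
      show (((c+1 : ℕ) : Fin n)).val = c + 1 - 0
      rw [Fin.val_cast_of_lt hc]
      omega
    | k+1 =>
      show ((descL n c)[k]'(by rw [descL_length]; omega)).val = (c+1) - (k+1)
      rw [ih k (by omega) (by omega)]
      omega

lemma mem_vSet {n : ℕ} {c : ℕ} {x : Fin n} :
    x ∈ vSet n c ↔ ((x : ℕ) = 0 ∨ c < (x : ℕ)) := by
  simp [vSet]

lemma insert_vSet {n : ℕ} [NeZero n] {c : ℕ} (h1 : 1 ≤ c) (h2 : c < n) :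
    insert ((c : ℕ) : Fin n) (vSet n c) = vSet n (c - 1) := by
  ext x
  simp only [Finset.mem_insert, mem_vSet, Fin.ext_iff, Fin.val_cast_of_lt h2]
  omega

lemma flatAux_cons {n : ℕ} (π : Equiv.Perm (Fin n)) (fuel : ℕ) (cur : Fin n)
    (visited : Finset (Fin n)) : ∃ t, flatAux π (fuel+1) cur visited = cur :: t :=
  ⟨_, rfl⟩

lemma flatAux_inv {n : ℕ} (π : Equiv.Perm (Fin n)) :
    ∀ (fuel : ℕ) (cur : Fin n) (visited : Finset (Fin n)),
      cur ∉ visited → visited.card + fuel = n →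
      (flatAux π fuel cur visited).length = fuel ∧
        (flatAux π fuel cur visited).Nodup ∧
        ∀ x, x ∈ flatAux π fuel cur visited ↔ x ∉ visited := by
  intro fuel
  induction fuel with
  | zero =>
    intro cur visited hcur hcard
    have hv : visited = Finset.univ := by
      apply Finset.eq_univ_of_card
      simpa using hcard
    refine ⟨rfl, List.nodup_nil, fun x => ?_⟩
    simp [flatAux, hv]
  | succ fuel ih =>
    intro cur visited hcur hcard
    have hcardins : (insert cur visited).card + fuel = n := by
      rw [Finset.card_insert_of_notMem hcur]; omega
    simp only [flatAux]
    split_ifs with h1 h2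
    · -- π cur ∈ insert, remaining nonempty
      have hmem := Finset.min'_mem _ h2
      have hnotin : (Finset.univ \ insert cur visited).min' h2 ∉ insert cur visited :=
        (Finset.mem_sdiff.mp hmem).2
      obtain ⟨hl, hnd, hm⟩ := ih _ _ hnotin hcardins
      refine ⟨by simp [hl], List.nodup_cons.mpr ⟨?_, hnd⟩, fun x => ?_⟩
      · rw [hm]; simp
      · rw [List.mem_cons, hm, Finset.mem_insert]
        constructor
        · rintro (rfl | h)
          · exact hcur
          · intro hx; exact h (Or.inr hx)
        · intro hx
          by_cases hxc : x = cur
          · exact Or.inl hxc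
          · exact Or.inr (fun h => h.elim hxc hx)
    · -- remaining empty: insert cur visited = univ
      have huniv : insert cur visited = Finset.univ := by
        have hemp := Finset.not_nonempty_iff_eq_empty.mp h2
        apply Finset.eq_univ_of_forall
        intro x
        by_contra hx
        have hmem : x ∈ Finset.univ \ insert cur visited := by simp [hx]
        rw [hemp] at hmem
        simp at hmem
      have hfuel : fuel = 0 := by
        have : (insert cur visited).card = n := by rw [huniv]; simp
        omega
      subst hfuel
      refine ⟨rfl, by simp, fun x => ?_⟩
      have hx : x ∈ insert cur visited := huniv ▸ Finset.mem_univ x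
      rw [Finset.mem_insert] at hx
      simp only [List.mem_cons, List.not_mem_nil, or_false]
      constructor
      · rintro rfl; exact hcur
      · intro hxv
        rcases hx with rfl | hx
        · rfl
        · exact absurd hx hxv
    · -- π cur ∉ insert
      obtain ⟨hl, hnd, hm⟩ := ih (π cur) _ h1 hcardins
      refine ⟨by simp [hl], List.nodup_cons.mpr ⟨?_, hnd⟩, fun x => ?_⟩
      · rw [hm]; simp
      · rw [List.mem_cons, hm, Finset.mem_insert]
        constructor
        · rintro (rfl | h)
          · exact hcur
          · intro hx; exact h (Or.inr hx)
        · intro hx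
          by_cases hxc : x = cur
          · exact Or.inl hxc
          · exact Or.inr (fun h => h.elim hxc hx)

lemma flatAux_step {n : ℕ} (π : Equiv.Perm (Fin n)) (fuel : ℕ) (cur d : Fin n)
    (visited : Finset (Fin n)) (rest : List (Fin n))
    (h : flatAux π (fuel+1) cur visited = cur :: d :: rest) :
    (π cur ∉ insert cur visited ∧ π cur = d) ∨
      (π cur ∈ insert cur visited ∧ ∃ hne : (Finset.univ \ insert cur visited).Nonempty,
        d = (Finset.univ \ insert cur visited).min' hne) := by
  simp only [flatAux] at h
  have htail := (List.cons.injEq _ _ _ _).mp h |>.2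
  split_ifs at htail with h1 h2
  · right
    refine ⟨h1, h2, ?_⟩
    cases fuel with
    | zero => simp [flatAux] at htail
    | succ f =>
      obtain ⟨t, ht⟩ := flatAux_cons π f _ _
      rw [ht] at htail
      exact ((List.cons.injEq _ _ _ _).mp htail).1.symm
  · left
    refine ⟨h1, ?_⟩
    cases fuel with
    | zero => simp [flatAux] at htail
    | succ f =>
      obtain ⟨t, ht⟩ := flatAux_cons π f _ _
      rw [ht] at htail
      exact ((List.cons.injEq _ _ _ _).mp htail).1
lemma sigma_apply {n : ℕ} (x : Fin (n+1)) : (finRotate (n+1))⁻¹ x = x - 1 := by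
  apply (finRotate (n+1)).injective
  rw [Equiv.Perm.coe_inv, Equiv.apply_symm_apply, finRotate_succ_apply]
  ring

lemma natCast_pred {n : ℕ} [NeZero n] (h : 1 ≤ n) : ((n-1 : ℕ) : Fin n) = -1 := by
  rw [Nat.cast_sub h]
  simp

lemma sigma_flatAux {n : ℕ} [NeZero n] (hn : 2 ≤ n) :
    ∀ c, 1 ≤ c → c ≤ n - 1 →
      flatAux (finRotate n)⁻¹ c ((c : ℕ) : Fin n) (vSet n c) = descL n c := by
  intro c
  induction c with
  | zero => intro h _; omega
  | succ c ih =>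
    intro h1 h2
    rcases Nat.eq_zero_or_pos c with rfl | hc
    · show flatAux _ 1 _ _ = _
      simp only [flatAux, descL]
      split_ifs <;> simp [flatAux, descL]
    · have hlt : c + 1 < n := by
        have := NeZero.ne n; omega
      have happ : (finRotate n)⁻¹ (((c+1 : ℕ)) : Fin n) = ((c : ℕ) : Fin n) := by
        obtain ⟨m, rfl⟩ : ∃ m, n = m + 1 := ⟨n-1, by omega⟩
        rw [sigma_apply]
        push_cast
        ring
      have hnotmem : (finRotate n)⁻¹ (((c+1:ℕ)) : Fin n)
          ∉ insert (((c+1:ℕ)) : Fin n) (vSet n (c+1)) := by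
        rw [happ, Finset.mem_insert, mem_vSet, Fin.ext_iff, Fin.val_cast_of_lt hlt,
          Fin.val_cast_of_lt (by omega : c < n)]
        push_neg
        exact ⟨by omega, by omega, by omega⟩
      show flatAux _ (c+1) _ _ = _
      simp only [flatAux]
      rw [if_neg hnotmem, happ, insert_vSet (by omega) hlt]
      have hred : (c + 1 - 1) = c := rfl
      rw [hred, ih (by omega) (by omega)]
      rfl

lemma chain {n : ℕ} [NeZero n] (π : Equiv.Perm (Fin n)) :
    ∀ c, 1 ≤ c → c ≤ n - 1 →
      flatAux π c ((c : ℕ) : Fin n) (vSet n c) = descL n c →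
      ∀ m, 2 ≤ m → m ≤ c →
        π ((m : ℕ) : Fin n) = ((m - 1 : ℕ) : Fin n) ∨
          (m = 2 ∧ π ((2 : ℕ) : Fin n) ∈ insert ((2 : ℕ) : Fin n) (vSet n 2)) := by
  intro c
  induction c with
  | zero => intro _ _ _ m hm1 hm2; omega
  | succ c ih =>
    intro h1 h2 heq m hm1 hm2
    rcases Nat.eq_zero_or_pos c with rfl | hc
    · omega
    obtain ⟨c', rfl⟩ : ∃ c', c = c' + 1 := ⟨c - 1, by omega⟩
    have hlt2 : c' + 2 < n := by
      have := NeZero.ne n; omega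
    have hd : descL n (c'+2) = (((c'+2:ℕ)) : Fin n) :: (((c'+1:ℕ)) : Fin n) :: descL n c' := rfl
    rw [hd] at heq
    have step := flatAux_step π (c'+1) (((c'+2:ℕ)) : Fin n) (((c'+1:ℕ)) : Fin n)
      (vSet n (c'+2)) (descL n c') heq
    rcases step with ⟨hnot, happ⟩ | ⟨hin, hne, hd2⟩
    · simp only [flatAux] at heq
      rw [if_neg hnot] at heq
      have htail := ((List.cons.injEq _ _ _ _).mp heq).2
      rw [happ, insert_vSet (by omega) hlt2] at htail
      have hred : (c' + 2 - 1) = c' + 1 := rfl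
      rw [hred] at htail
      rcases Nat.lt_or_ge m (c'+2) with hm | hm
      · exact ih (by omega) (by omega) htail m hm1 (by omega)
      · have hmeq : m = c' + 2 := by omega
        subst hmeq
        left
        have hred2 : (c' + 2 - 1) = c' + 1 := rfl
        rw [hred2]
        exact happ
    · -- min' branch: show c' = 0
      have h1mem : ((1:ℕ) : Fin n) ∈ Finset.univ \ insert (((c'+2:ℕ)) : Fin n) (vSet n (c'+2)) := by
        rw [Finset.mem_sdiff, Finset.mem_insert, mem_vSet, Fin.ext_iff,
          Fin.val_cast_of_lt hlt2, Fin.val_cast_of_lt (by omega : 1 < n)]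
        push_neg
        exact ⟨Finset.mem_univ _, by omega, by omega, by omega⟩
      have hminle := Finset.min'_le _ _ h1mem
      have hminmem := Finset.min'_mem _ hne
      rw [Finset.mem_sdiff, Finset.mem_insert, mem_vSet] at hminmem
      have hv1 : (((Finset.univ \ insert (((c'+2:ℕ)) : Fin n) (vSet n (c'+2))).min' hne) : ℕ) ≤ 1 := by
        have := hminle
        rw [Fin.le_def, Fin.val_cast_of_lt (by omega : 1 < n)] at this
        exact this
      have hv2 : (((Finset.univ \ insert (((c'+2:ℕ)) : Fin n) (vSet n (c'+2))).min' hne) : ℕ) ≠ 0 := by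
        push_neg at hminmem
        exact hminmem.2.2.1
      have hveq : c' + 1 = (((Finset.univ \ insert (((c'+2:ℕ)) : Fin n) (vSet n (c'+2))).min' hne) : ℕ) := by
        rw [← hd2, Fin.val_cast_of_lt (by omega : c' + 1 < n)]
      have hc0 : c' = 0 := by omega
      subst hc0
      have hmeq : m = 2 := by omega
      subst hmeq
      right
      refine ⟨rfl, ?_⟩
      simpa using hin
lemma natCast_inj_fin {n a b : ℕ} [NeZero n] (ha : a < n) (hb : b < n)
    (h : ((a : ℕ) : Fin n) = ((b : ℕ) : Fin n)) : a = b := by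
  rwa [Fin.ext_iff, Fin.val_cast_of_lt ha, Fin.val_cast_of_lt hb] at h

lemma flat_eq {n : ℕ} (π : Equiv.Perm (Fin n)) (h0 : 0 < n) :
    flat π = (flatAux π n ⟨0,h0⟩ ∅).map (fun x => x.val + 1) := by
  rw [flat, dif_pos h0]
  generalize (flatAux π n ⟨0,h0⟩ ∅) = M
  induction M with
  | nil => rfl
  | cons a t ih => simp only [List.flatMap_cons, List.map_append, List.map_cons,
      List.map_nil, List.nil_append, List.singleton_append] at ih ⊢ <;> simp_all

lemma descL_map {n : ℕ} [NeZero n] :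
    ∀ c, c < n → (descL n c).map (fun x => x.val + 1) = (List.range' 2 c).reverse := by
  intro c
  induction c with
  | zero => intro _; simp [descL]
  | succ c ih =>
    intro hc
    have hr : List.range' 2 (c+1) = List.range' 2 c ++ [2+c] := by
      simpa using List.range'_concat (step := 1) (s := 2) (n := c)
    rw [hr, List.reverse_append]
    show (((c+1 : ℕ) : Fin n).val + 1) :: (descL n c).map (fun x => x.val + 1) = _
    rw [Fin.val_cast_of_lt hc, ih (by omega)]
    simp only [List.reverse_cons, List.reverse_nil, List.nil_append, List.singleton_append,
      List.cons.injEq]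
    exact ⟨by omega, trivial⟩

lemma w_getD {n : ℕ} (hn : 2 ≤ n) (k : ℕ) (h2 : k + 1 < n) :
    (1 :: (List.range' 2 (n-1)).reverse).getD (k+1) 0 = n - k := by
  rw [List.getD_cons_succ]
  have hk : k < (List.range' 2 (n-1)).reverse.length := by simp; omega
  rw [List.getD_eq_getElem _ _ hk, List.getElem_reverse]
  simp only [List.length_reverse, List.length_range', List.getElem_range']
  omega

lemma no_pattern {n : ℕ} (hn : 2 ≤ n) :
    ¬ contains1_23 (1 :: (List.range' 2 (n-1)).reverse) := by
  rintro ⟨i, j, hij, hj1, _, h3⟩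
  have hlen : (1 :: (List.range' 2 (n-1)).reverse).length = n := by simp; omega
  have hj1' : (j : ℕ) + 1 < n := lt_of_lt_of_le hj1 (le_of_eq hlen)
  obtain ⟨k, hk⟩ : ∃ k, (j : ℕ) = k + 1 := ⟨(j:ℕ)-1, by omega⟩
  have e1 : (1 :: (List.range' 2 (n-1)).reverse).getD (j:ℕ) 0 = n - k := by
    rw [hk]; exact w_getD hn k (by omega)
  have e2 : (1 :: (List.range' 2 (n-1)).reverse).getD ((j:ℕ)+1) 0 = n - (k+1) := by
    rw [hk]; exact w_getD hn (k+1) (by omega)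
  rw [e1, e2] at h3
  omega

lemma flat_forces {n : ℕ} [NeZero n] (hn : 2 ≤ n) (π : Equiv.Perm (Fin n)) (h0 : 0 < n)
    (hav : ¬ contains1_23 (flat π)) :
    flatAux π n ⟨0, h0⟩ ∅ = (⟨0, h0⟩ : Fin n) :: descL n (n-1) := by
  obtain ⟨hlen, hnd, hmem⟩ := flatAux_inv π n ⟨0, h0⟩ ∅ (by simp) (by simp)
  set L := flatAux π n (⟨0, h0⟩ : Fin n) ∅ with hL
  have hflat : flat π = L.map (fun x => x.val + 1) := flat_eq π h0
  have hflen : (flat π).length = n := by rw [hflat, List.length_map, hlen]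
  -- head
  obtain ⟨t, ht⟩ := flatAux_cons π (n-1) (⟨0, h0⟩ : Fin n) ∅
  rw [Nat.sub_add_cancel (by omega : 1 ≤ n)] at ht
  have hval0 : L.getD 0 ⟨0, h0⟩ = ⟨0, h0⟩ := by rw [hL, ht]; rfl
  have hv0 : (⟨0, h0⟩ : Fin n).val = 0 := rfl
  -- injectivity
  have hinj : ∀ i j, i < n → j < n → L.getD i ⟨0, h0⟩ = L.getD j ⟨0, h0⟩ → i = j := by
    intro i j hi hj hEq
    rw [List.getD_eq_getElem _ _ (show i < L.length by omega),
      List.getD_eq_getElem _ _ (show j < L.length by omega)] at hEq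
    exact (List.Nodup.getElem_inj_iff hnd).mp hEq
  -- getD of flat π
  have hgetD : ∀ k, k < n → (flat π).getD k 0 = (L.getD k ⟨0, h0⟩ : Fin n).val + 1 := by
    intro k hk
    have h1 : k < L.length := by omega
    rw [hflat, List.getD_eq_getElem _ _ (show k < (L.map (fun x => x.val + 1)).length by
        rw [List.length_map]; omega),
      List.getElem_map, List.getD_eq_getElem _ _ h1]
  -- strictly decreasing after position 0
  have hdesc : ∀ k, 1 ≤ k → k + 1 < n →
      (L.getD (k+1) ⟨0, h0⟩ : Fin n).val < (L.getD k ⟨0, h0⟩ : Fin n).val := by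
    intro k hk hk1
    by_contra hge
    push_neg at hge
    have hneq : (L.getD k ⟨0, h0⟩ : Fin n).val ≠ (L.getD (k+1) ⟨0, h0⟩ : Fin n).val := by
      intro hEq
      have := hinj k (k+1) (by omega) (by omega) (Fin.ext hEq)
      omega
    have hlt : (L.getD k ⟨0, h0⟩ : Fin n).val < (L.getD (k+1) ⟨0, h0⟩ : Fin n).val := by omega
    apply hav
    refine ⟨⟨0, by rw [hflen]; omega⟩, ⟨k, by rw [hflen]; omega⟩, hk, ?_, ?_, ?_⟩
    · show k + 1 < (flat π).length
      rw [hflen]; omega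
    · show (flat π).getD 0 0 < (flat π).getD k 0
      rw [hgetD 0 (by omega), hgetD k (by omega), hval0]
      have : (L.getD k ⟨0, h0⟩ : Fin n).val ≠ 0 := by
        intro hEq
        have := hinj k 0 (by omega) (by omega) (by rw [hval0]; exact Fin.ext hEq)
        omega
      omega
    · show (flat π).getD k 0 < (flat π).getD (k+1) 0
      rw [hgetD k (by omega), hgetD (k+1) (by omega)]
      omega
  -- lower bound
  have hlow : ∀ d, d ≤ n - 2 → d + 1 ≤ (L.getD (n-1-d) ⟨0, h0⟩ : Fin n).val := by
    intro d
    induction d with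
    | zero =>
      intro _
      have : (L.getD (n-1) ⟨0, h0⟩ : Fin n).val ≠ 0 := by
        intro hEq
        have := hinj (n-1) 0 (by omega) (by omega) (by rw [hval0]; exact Fin.ext hEq)
        omega
      show 0 + 1 ≤ (L.getD (n-1) ⟨0, h0⟩ : Fin n).val
      omega
    | succ d ih =>
      intro hd
      have hstep := hdesc (n-1-(d+1)) (by omega) (by omega)
      have e : n-1-(d+1)+1 = n-1-d := by omega
      rw [e] at hstep
      have := ih (by omega)
      omega
  -- upper bound
  have hupp : ∀ k, 1 ≤ k → k < n → (L.getD k ⟨0, h0⟩ : Fin n).val ≤ n - k := by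
    intro k
    induction k with
    | zero => omega
    | succ k ih =>
      intro _ hk
      rcases Nat.eq_zero_or_pos k with rfl | hkpos
      · have := (L.getD 1 ⟨0, h0⟩ : Fin n).isLt
        omega
      · have := hdesc k (by omega) (by omega)
        have := ih (by omega) (by omega)
        omega
  have hval : ∀ k, 1 ≤ k → k < n → (L.getD k ⟨0, h0⟩ : Fin n).val = n - k := by
    intro k h1 h2
    have hl := hlow (n-1-k) (by omega)
    have e : n-1-(n-1-k) = k := by omega
    rw [e] at hl
    have hu := hupp k h1 h2
    omega
  -- conclude
  show L = _
  apply List.ext_getElem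
  · rw [hlen, List.length_cons, descL_length]
    omega
  · intro i hi1 hi2
    rw [hlen] at hi1
    match i with
    | 0 =>
      have e := List.getD_eq_getElem L (⟨0, h0⟩ : Fin n) (show 0 < L.length by omega)
      rw [← e, hval0]
      rfl
    | k+1 =>
      show L[k+1]'_ = (descL n (n-1))[k]'(by rw [List.length_cons, descL_length] at hi2; rw [descL_length]; omega)
      apply Fin.ext
      have e := List.getD_eq_getElem L (⟨0, h0⟩ : Fin n) (show k+1 < L.length by omega)
      rw [← e, hval (k+1) (by omega) (by omega),
        descL_getElem (n-1) k (by omega) (by rw [List.length_cons, descL_length] at hi2; omega)]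
      omega
lemma natCastSucc_eq_neg_one {m : ℕ} : ((m+1 : ℕ) : Fin (m+2)) = -1 := by
  apply eq_neg_of_add_eq_zero_left
  have h : ((m+2 : ℕ) : Fin (m+2)) = 0 := Fin.natCast_self _
  push_cast at h ⊢
  linear_combination h

lemma insert_zero_vSet {m : ℕ} (h0 : 0 < m + 2) :
    insert (⟨0, h0⟩ : Fin (m+2)) ∅ = vSet (m+2) (m+1) := by
  ext x
  simp only [Finset.mem_insert, Finset.notMem_empty, or_false, mem_vSet, Fin.ext_iff]
  have := x.isLt
  change x.val = 0 ↔ x.val = 0 ∨ m + 1 < x.val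
  omega

lemma flatAux_succ {n : ℕ} (π : Equiv.Perm (Fin n)) (fuel : ℕ) (cur : Fin n)
    (visited : Finset (Fin n)) :
    flatAux π (fuel+1) cur visited =
      cur :: (if π cur ∈ insert cur visited then
        (if h : (Finset.univ \ insert cur visited).Nonempty then
          flatAux π fuel ((Finset.univ \ insert cur visited).min' h) (insert cur visited)
        else [])
      else flatAux π fuel (π cur) (insert cur visited)) := rfl

lemma sigma_flat {m : ℕ} (h0 : 0 < m + 2) :
    flatAux (finRotate (m+2))⁻¹ (m+2) ⟨0, h0⟩ ∅
      = (⟨0, h0⟩ : Fin (m+2)) :: descL (m+2) (m+1) := by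
  have happ0 : (finRotate (m+2))⁻¹ (⟨0, h0⟩ : Fin (m+2)) = ((m+1 : ℕ) : Fin (m+2)) := by
    have hz : (⟨0, h0⟩ : Fin (m+2)) = 0 := rfl
    rw [hz, sigma_apply, zero_sub, natCastSucc_eq_neg_one]
  have hnotmem : (finRotate (m+2))⁻¹ (⟨0, h0⟩ : Fin (m+2))
      ∉ insert (⟨0, h0⟩ : Fin (m+2)) (∅ : Finset (Fin (m+2))) := by
    rw [happ0]
    simp only [Finset.mem_insert, Finset.notMem_empty, or_false]
    intro hEq
    have h1 := congrArg Fin.val hEq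
    rw [Fin.val_cast_of_lt (by omega)] at h1
    simp at h1
  show flatAux _ (m+1+1) _ _ = _
  rw [flatAux_succ, if_neg hnotmem, happ0, insert_zero_vSet h0,
    sigma_flatAux (by omega) (m+1) (by omega) (by omega)]

lemma unique_pi {m : ℕ} (h0 : 0 < m + 2) (π : Equiv.Perm (Fin (m+2)))
    (hder : isDerangement π)
    (h : flatAux π (m+2) ⟨0, h0⟩ ∅ = (⟨0, h0⟩ : Fin (m+2)) :: descL (m+2) (m+1)) :
    π = (finRotate (m+2))⁻¹ := by
  have hd : descL (m+2) (m+1) = ((m+1 : ℕ) : Fin (m+2)) :: descL (m+2) m := rfl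
  have hstep0 := flatAux_step π (m+1) ⟨0, h0⟩ ((m+1 : ℕ) : Fin (m+2)) ∅ (descL (m+2) m)
    h
  rcases hstep0 with ⟨hnot0, happ0⟩ | ⟨hin0, _⟩
  swap
  · exfalso
    rw [Finset.mem_insert] at hin0
    simp only [Finset.notMem_empty, or_false] at hin0
    exact hder _ hin0
  -- tail equation
  have htail : flatAux π (m+1) ((m+1:ℕ) : Fin (m+2)) (vSet (m+2) (m+1)) = descL (m+2) (m+1) := by
    have hu : flatAux π (m+2) ⟨0, h0⟩ ∅
        = (⟨0, h0⟩ : Fin (m+2)) :: flatAux π (m+1) (π ⟨0, h0⟩) (insert (⟨0, h0⟩ : Fin (m+2)) ∅) := by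
      show flatAux π (m+1+1) _ _ = _
      simp only [flatAux]
      rw [if_neg hnot0]
    rw [h] at hu
    have h2 := ((List.cons.injEq _ _ _ _).mp hu).2
    rw [happ0, insert_zero_vSet h0] at h2
    exact h2.symm
  have facts := chain π (m+1) (by omega) (by omega) htail
  have hπm : ∀ k : ℕ, 3 ≤ k → k ≤ m+1 → π ((k:ℕ) : Fin (m+2)) = ((k-1 : ℕ) : Fin (m+2)) := by
    intro k h3 hk
    rcases facts k (by omega) hk with hgood | ⟨h2eq, _⟩
    · exact hgood
    · omega
  have hval1 : (((1:ℕ) : Fin (m+2)) : ℕ) = 1 := Fin.val_cast_of_lt (by omega)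
  have hπ2 : 1 ≤ m → π ((2:ℕ) : Fin (m+2)) = ((1:ℕ) : Fin (m+2)) := by
    intro hm
    rcases facts 2 (by omega) (by omega) with hgood | ⟨_, hbad⟩
    · exact hgood
    · exfalso
      have hπx : π (π⁻¹ ((1:ℕ) : Fin (m+2))) = ((1:ℕ) : Fin (m+2)) :=
        Equiv.apply_symm_apply π _
      set x := π⁻¹ ((1:ℕ) : Fin (m+2)) with hxdef
      have hxlt := x.isLt
      by_cases h0v : x.val = 0
      · have hx0 : x = ⟨0, h0⟩ := Fin.ext h0v
        rw [hx0, happ0] at hπx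
        have := natCast_inj_fin (n := m+2) (by omega) (by omega) hπx
        omega
      by_cases h1v : x.val = 1
      · have hx1 : x = ((1:ℕ) : Fin (m+2)) := Fin.ext (by rw [hval1]; exact h1v)
        exact hder x (by rw [hπx, hx1])
      by_cases h2v : x.val = 2
      · have hx2 : x = ((2:ℕ) : Fin (m+2)) :=
          Fin.ext (by rw [Fin.val_cast_of_lt (by omega)]; exact h2v)
        rw [hx2] at hπx
        rw [hπx, Finset.mem_insert, mem_vSet] at hbad
        rcases hbad with hE | hE
        · have := natCast_inj_fin (n := m+2) (by omega) (by omega) hE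
          omega
        · rw [hval1] at hE
          omega
      · have hx3 : x = ((x.val : ℕ) : Fin (m+2)) := (Fin.cast_val_eq_self x).symm
        have hgd := hπm x.val (by omega) (by omega)
        rw [← hx3] at hgd
        have hE := hgd.symm.trans hπx
        have := natCast_inj_fin (n := m+2) (by omega) (by omega) hE
        omega
  have hπ1 : π ((1:ℕ) : Fin (m+2)) = ⟨0, h0⟩ := by
    have hπy : π (π⁻¹ (⟨0, h0⟩ : Fin (m+2))) = ⟨0, h0⟩ := Equiv.apply_symm_apply π _
    set y := π⁻¹ (⟨0, h0⟩ : Fin (m+2)) with hydef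
    have hylt := y.isLt
    by_cases h0v : y.val = 0
    · exfalso
      have hy0 : y = ⟨0, h0⟩ := Fin.ext h0v
      rw [hy0, happ0] at hπy
      have h1 := congrArg Fin.val hπy
      rw [Fin.val_cast_of_lt (by omega)] at h1
      simp at h1
    by_cases h1v : y.val = 1
    · have hy1 : y = ((1:ℕ) : Fin (m+2)) := Fin.ext (by rw [hval1]; exact h1v)
      rw [← hy1]
      exact hπy
    exfalso
    by_cases h2v : y.val = 2
    · have hy2 : y = ((2:ℕ) : Fin (m+2)) :=
        Fin.ext (by rw [Fin.val_cast_of_lt (by omega)]; exact h2v)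
      rw [hy2, hπ2 (by omega)] at hπy
      have h1 := congrArg Fin.val hπy
      rw [hval1] at h1
      simp at h1
    · have hy3 : y = ((y.val : ℕ) : Fin (m+2)) := (Fin.cast_val_eq_self y).symm
      have hgd := hπm y.val (by omega) (by omega)
      rw [← hy3] at hgd
      rw [hgd] at hπy
      have h1 := congrArg Fin.val hπy
      rw [Fin.val_cast_of_lt (by omega)] at h1
      simp at h1
      omega
  -- conclude
  apply Equiv.ext
  intro x
  rw [sigma_apply]
  rcases Nat.eq_zero_or_pos x.val with hx0 | hxpos
  · have hx : x = ⟨0, h0⟩ := Fin.ext hx0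
    rw [hx, happ0, show (⟨0, h0⟩ : Fin (m+2)) = 0 from rfl, zero_sub, natCastSucc_eq_neg_one]
  · have hxlt := x.isLt
    obtain ⟨k, hk⟩ : ∃ k, x.val = k + 1 := ⟨x.val - 1, by omega⟩
    have hxk : x = (((k+1) : ℕ) : Fin (m+2)) :=
      Fin.ext (by rw [Fin.val_cast_of_lt (by omega)]; exact hk)
    have hsub : (((k+1:ℕ)) : Fin (m+2)) - 1 = ((k : ℕ) : Fin (m+2)) := by
      push_cast
      ring
    rw [hxk, hsub]
    by_cases hk0 : k = 0
    · subst hk0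
      rw [show ((0+1 : ℕ) : Fin (m+2)) = ((1:ℕ) : Fin (m+2)) from rfl, hπ1]
      exact Fin.ext (by simp)
    by_cases hk1 : k = 1
    · subst hk1
      rw [show ((1+1 : ℕ) : Fin (m+2)) = ((2:ℕ) : Fin (m+2)) from rfl, hπ2 (by omega)]
    · have := hπm (k+1) (by omega) (by omega)
      rw [show (k+1)-1 = k from rfl] at this
      exact this

theorem stmt_8 (n : ℕ) (hn : 2 ≤ n) :
    (Finset.univ.filter
        (fun π : Equiv.Perm (Fin n) => isDerangement π ∧ ¬ contains1_23 (flat π))).card = 1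
    ∧ ∀ π ∈ Finset.univ.filter
        (fun π : Equiv.Perm (Fin n) => isDerangement π ∧ ¬ contains1_23 (flat π)),
        flat π = 1 :: (List.range' 2 (n - 1)).reverse := by
  obtain ⟨m, rfl⟩ : ∃ m, n = m + 2 := ⟨n - 2, by omega⟩
  have h0 : 0 < m + 2 := by omega
  have hw : flat (finRotate (m+2))⁻¹ = 1 :: (List.range' 2 (m+2-1)).reverse := by
    rw [flat_eq _ h0, sigma_flat h0]
    show ((⟨0, h0⟩ : Fin (m+2)).val + 1) :: (descL (m+2) (m+1)).map (fun x => x.val + 1) = _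
    rw [descL_map (m+1) (by omega)]
    rfl
  have hder : isDerangement (finRotate (m+2))⁻¹ := by
    intro x hEq
    rw [sigma_apply] at hEq
    have h1 := congrArg Fin.val (sub_eq_self.mp hEq)
    simp at h1
  have hnp : ¬ contains1_23 (flat (finRotate (m+2))⁻¹) := by
    rw [hw]
    exact no_pattern (by omega)
  have hiff : ∀ π : Equiv.Perm (Fin (m+2)),
      (isDerangement π ∧ ¬ contains1_23 (flat π)) ↔ π = (finRotate (m+2))⁻¹ := by
    intro π
    constructor
    · rintro ⟨hd, hav⟩
      exact unique_pi h0 π hd (flat_forces (by omega) π h0 hav)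
    · rintro rfl
      exact ⟨hder, hnp⟩
  have hset : (Finset.univ.filter
      (fun π : Equiv.Perm (Fin (m+2)) => isDerangement π ∧ ¬ contains1_23 (flat π)))
      = {(finRotate (m+2))⁻¹} := by
    ext π
    simp only [Finset.mem_filter, Finset.mem_univ, true_and, Finset.mem_singleton]
    exact hiff π
  refine ⟨by rw [hset]; exact Finset.card_singleton _, ?_⟩
  intro π hπ
  rw [hset, Finset.mem_singleton] at hπ
  rw [hπ, hw]
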